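/- Let S ≤ M n be a submodule. The map swap restricts to a Pauli-weight-preserving bijection from the set {v ∈ M n : (∀ s ∈ S, ω(v,s) = 0) ∧ v ∉ S} onto the set {w ∈ M n : (∀ s ∈ S, ⟨w,s⟩ = 0) ∧ w ∉ swap '' S}, where ⟨w,s⟩ = Σ_j ((w j).1·(s j).1 + (w j).2·(s j).2) is the standard dot product. In particular, the minimum Pauli weight over the first set equals the minimum Pauli weight over the second set. (This shows the ququad CSS code obtained from an [[n,k,d]] stabilizer code via the map of Lemma 1 again has distance d.) -/

import Mathlib

/-- Binary symplectic representation of `n`-qubit Pauli operators (up to phase). -/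
abbrev M (n : ℕ) : Type := Fin n → ZMod 2 × ZMod 2

/-- The symplectic form: two Paulis commute iff it vanishes. -/
def symp {n : ℕ} (u v : M n) : ZMod 2 :=
  ∑ j, ((u j).1 * (v j).2 + (u j).2 * (v j).1)

/-- The standard dot product on `M n`. -/
def dotM {n : ℕ} (u v : M n) : ZMod 2 :=
  ∑ j, ((u j).1 * (v j).1 + (u j).2 * (v j).2)

/-- The involution swapping the X- and Z-parts on every qubit. -/
def swapP {n : ℕ} (v : M n) : M n := fun j => ((v j).2, (v j).1)

/-- The (Pauli) weight: the number of qubits on which `v` acts nontrivially. -/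
def wt {n : ℕ} (v : M n) : ℕ := (Finset.univ.filter fun j => v j ≠ 0).card

/-
On each qubit `swapP` exchanges the X- and Z-parts, which turns the symplectic form into the
dot product: `symp (swapP v) s = dotM v s`. Since `swapP` is an involution, the image of the
first set under it is its preimage, which is exactly the second set; and `swapP` fixes the
support of every vector, so the two sets have the same weights.
-/

namespace PauliSwap

variable {n : ℕ}

theorem swapP_involutive : Function.Involutive (swapP (n := n)) := fun _ => rfl

theorem symp_swapP_left (v s : M n) : symp (swapP v) s = dotM v s :=
  Finset.sum_congr rfl fun _ _ => add_comm _ _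

theorem wt_swapP (v : M n) : wt (swapP v) = wt v := by
  unfold wt
  congr 1
  refine Finset.filter_congr fun j _ => not_congr ?_
  simp only [swapP, Prod.ext_iff, Prod.fst_zero, Prod.snd_zero]
  exact and_comm

theorem image_swapP_eq_preimage (s : Set (M n)) : swapP '' s = swapP ⁻¹' s :=
  congrFun (Set.image_eq_preimage_of_inverse swapP_involutive.leftInverse
    swapP_involutive.rightInverse) s

theorem image_swapP_symp_orthogonal_diff (S : Set (M n)) :
    swapP '' {v : M n | (∀ s ∈ S, symp v s = 0) ∧ v ∉ S} =
      {w : M n | (∀ s ∈ S, dotM w s = 0) ∧ w ∉ swapP '' S} := by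
  simp only [image_swapP_eq_preimage, Set.preimage_ofPred_eq, symp_swapP_left, Set.mem_preimage]

theorem image_wt_image_swapP (s : Set (M n)) : wt '' (swapP '' s) = wt '' s := by
  rw [Set.image_image]
  simp only [wt_swapP]

end PauliSwap

open PauliSwap in
theorem stmt1 (n : ℕ) (S : Submodule (ZMod 2) (M n)) :
    Set.BijOn swapP
      {v : M n | (∀ s ∈ S, symp v s = 0) ∧ v ∉ S}
      {w : M n | (∀ s ∈ S, dotM w s = 0) ∧ w ∉ swapP '' (S : Set (M n))} ∧
    (∀ v : M n, wt (swapP v) = wt v) ∧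
    sInf (wt '' {v : M n | (∀ s ∈ S, symp v s = 0) ∧ v ∉ S}) =
      sInf (wt '' {w : M n | (∀ s ∈ S, dotM w s = 0) ∧ w ∉ swapP '' (S : Set (M n))}) := by
  have himage := image_swapP_symp_orthogonal_diff (S : Set (M n))
  simp only [SetLike.mem_coe] at himage
  rw [← himage, image_wt_image_swapP]
  exact ⟨swapP_involutive.injective.injOn.bijOn_image, wt_swapP, rfl⟩
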